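/- Let T > 0 and n ≥ 1, and let [0,T]^n_{0̂} = {(t_1,…,t_n) ∈ [0,T]^n : t_i ≠ t_j for all i ≠ j}. The trace σ-algebra {C ∩ [0,T]^n_{0̂} : C ∈ ℬ([0,T]^n)} coincides with the σ-algebra of subsets of [0,T]^n_{0̂} generated by the rectangles A_1 × ⋯ × A_n with A_1,…,A_n ∈ ℬ([0,T]) pairwise disjoint. -/

import Mathlib

/-!
Call a countable family `t` of measurable sets strictly separating if for `x ≠ y` some `t k`
contains `x` but not `y`; every countably separated space, `[0,T]` among them, has one. Given an
injective tuple `x`, choose `sep i j` among the `t k` containing `x i` but not `x j`: the cells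
`⋂ j ≠ i, sep i j \ sep j i` are pairwise disjoint and contain `x i`. Since there are countably
many choices of `sep`, every measurable rectangle, restricted to injective tuples, is a countable
union of rectangles with pairwise disjoint sides, and measurable rectangles generate the product
σ-algebra.
-/

open MeasurableSpace Set Function

variable {ι κ α : Type*}

theorem pairwise_disjoint_iInter_ne_diff (sep : ι → ι → Set α) :
    Pairwise (Disjoint on fun i ↦ ⋂ (j) (_ : j ≠ i), sep i j \ sep j i) := by
  intro i j hij
  refine Disjoint.mono (biInter_subset_of_mem hij.symm) (biInter_subset_of_mem hij) ?_
  exact disjoint_sdiff_left.mono_right sdiff_subset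

theorem exists_measurableSet_mem_notMem_of_countablySeparated [MeasurableSpace α]
    [CountablySeparated α] :
    ∃ t : ℕ × Bool → Set α, (∀ k, MeasurableSet (t k)) ∧
      ∀ x y, x ≠ y → ∃ k, x ∈ t k ∧ y ∉ t k := by
  obtain ⟨s, hs, hsep⟩ := exists_seq_separating α MeasurableSet.empty univ
  refine ⟨fun k ↦ if k.2 then s k.1 else (s k.1)ᶜ, ?_, fun x y hxy ↦ ?_⟩
  · rintro ⟨n, _ | _⟩
    exacts [(hs n).compl, hs n]
  · obtain ⟨n, hn⟩ : ∃ n, ¬(x ∈ s n ↔ y ∈ s n) := by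
      by_contra! h
      exact hxy (hsep x trivial y trivial h)
    by_cases hx : x ∈ s n
    · exact ⟨(n, true), by simp_all⟩
    · exact ⟨(n, false), by simp_all⟩

theorem preimage_val_pi_eq_iUnion_of_separating [Nonempty κ] {t : κ → Set α}
    (ht : ∀ x y, x ≠ y → ∃ k, x ∈ t k ∧ y ∉ t k) (A : ι → Set α) :
    (Subtype.val ⁻¹' univ.pi A : Set {x : ι → α // Injective x}) =
      ⋃ sep : ι → ι → κ, Subtype.val ⁻¹' univ.pi
        fun i ↦ A i ∩ ⋂ (j) (_ : j ≠ i), t (sep i j) \ t (sep j i) := by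
  ext ⟨x, hx⟩
  simp only [mem_preimage, mem_iUnion, mem_univ_pi, mem_inter_iff, mem_iInter, mem_sdiff]
  refine ⟨fun hA ↦ ?_, fun ⟨_, h⟩ i ↦ (h i).1⟩
  choose! sep hmem hnotMem using fun i j (h : j ≠ i) ↦ ht (x i) (x j) (hx.ne h.symm)
  exact ⟨sep, fun i ↦ ⟨hA i, fun j hj ↦ ⟨hmem i j hj, hnotMem j i hj.symm⟩⟩⟩

theorem generateFrom_disjoint_pi_eq_comap_val_injective [MeasurableSpace α] [Finite ι]
    [CountablySeparated α] :
    generateFrom {s : Set {x : ι → α // Injective x} | ∃ A : ι → Set α,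
        (∀ i, MeasurableSet (A i)) ∧ Pairwise (Disjoint on A) ∧ s = Subtype.val ⁻¹' univ.pi A} =
      .comap Subtype.val MeasurableSpace.pi := by
  refine le_antisymm (generateFrom_le ?_) ?_
  · rintro _ ⟨A, hA, -, rfl⟩
    exact (MeasurableSet.univ_pi hA).preimage measurable_subtype_coe
  obtain ⟨t, htm, ht⟩ := exists_measurableSet_mem_notMem_of_countablySeparated (α := α)
  rw [← generateFrom_pi, comap_generateFrom]
  refine generateFrom_le ?_
  rintro _ ⟨_, ⟨A, hA, rfl⟩, rfl⟩
  rw [preimage_val_pi_eq_iUnion_of_separating ht]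
  refine MeasurableSet.iUnion fun sep ↦ measurableSet_generateFrom ⟨_, fun i ↦ ?_, ?_, rfl⟩
  · exact (hA i trivial).inter <| .iInter fun j ↦ .iInter fun _ ↦ (htm _).diff (htm _)
  · exact (pairwise_disjoint_iInter_ne_diff _).mono fun i j h ↦
      h.mono inter_subset_right inter_subset_right

theorem trace_sigmaAlgebra_offDiag_generated_by_disjoint_rectangles_general
    (T : ℝ) (n : ℕ) :
    MeasurableSpace.generateFrom
        {s : Set {x : Fin n → Set.Icc (0 : ℝ) T // Function.Injective x} |
          ∃ A : Fin n → Set (Set.Icc (0 : ℝ) T),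
            (∀ i, MeasurableSet (A i)) ∧
            Pairwise (Function.onFun Disjoint A) ∧
            s = Subtype.val ⁻¹' Set.univ.pi A}
      = (inferInstance :
          MeasurableSpace {x : Fin n → Set.Icc (0 : ℝ) T // Function.Injective x}) :=
  generateFrom_disjoint_pi_eq_comap_val_injective

/-- **The trace σ-algebra on the off-diagonal set is generated by pairwise disjoint
rectangles.** Let `T > 0`, `n ≥ 1`, and let
`[0,T]^n_{0̂} = {(t_1,…,t_n) ∈ [0,T]^n : t_i ≠ t_j for i ≠ j}` (the subtype of
injective tuples). The trace σ-algebra `{C ∩ [0,T]^n_{0̂} : C Borel}` (the canonical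
σ-algebra of the subtype) coincides with the σ-algebra generated by the traces of the
rectangles `A_1 × ⋯ × A_n` with `A_1,…,A_n` Borel and pairwise disjoint. -/
theorem trace_sigmaAlgebra_offDiag_generated_by_disjoint_rectangles
    (T : ℝ) (hT : 0 < T) (n : ℕ) (hn : 1 ≤ n) :
    MeasurableSpace.generateFrom
        {s : Set {x : Fin n → Set.Icc (0 : ℝ) T // Function.Injective x} |
          ∃ A : Fin n → Set (Set.Icc (0 : ℝ) T),
            (∀ i, MeasurableSet (A i)) ∧
            Pairwise (Function.onFun Disjoint A) ∧
            s = Subtype.val ⁻¹' Set.univ.pi A}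
      = (inferInstance :
          MeasurableSpace {x : Fin n → Set.Icc (0 : ℝ) T // Function.Injective x}) :=
  trace_sigmaAlgebra_offDiag_generated_by_disjoint_rectangles_general T n
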